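/- The number of interval multiset estimates for the assessment problem P^{l,η} equals Σ_{k=1}^{min(l,η)} (l−k+1)·C(η−1, k−1), where C denotes the binomial coefficient. -/

import Mathlib

/-!
An interval estimate is determined by its support, an interval `[a, b]` of levels, together with
a composition of `η` into `b - a + 1` positive parts; by stars and bars there are
`C(η - 1, b - a)` of those. Grouping the intervals by their length `k` gives the factor
`l - k + 1`, and the terms with `k > η` vanish.
-/

open Finset

namespace Finset

variable {ι : Type*} [DecidableEq ι]

theorem map_coe_finsuppAntidiag {μ : Type*} [AddCommMonoid μ] [HasAntidiagonal μ] [DecidableEq μ]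
    (s : Finset ι) (n : μ) :
    (s.finsuppAntidiag n).map ⟨(⇑), DFunLike.coe_injective⟩ = s.piAntidiag n := by
  ext f
  simp only [mem_map, mem_finsuppAntidiag, mem_piAntidiag, Function.Embedding.coeFn_mk]
  constructor
  · rintro ⟨g, ⟨hsum, hsupp⟩, rfl⟩
    exact ⟨hsum, fun i hi => hsupp (Finsupp.mem_support_iff.mpr hi)⟩
  · rintro ⟨hsum, hsupp⟩
    exact ⟨Finsupp.onFinset s f hsupp, ⟨hsum, Finsupp.support_onFinset_subset⟩, rfl⟩

theorem card_piAntidiag_nat_eq_choose (s : Finset ι) (n : ℕ) :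
    #(s.piAntidiag n) = (#s + n - 1).choose n := by
  rw [← map_coe_finsuppAntidiag, card_map, card_finsuppAntidiag_nat_eq_choose]

def positivePiAntidiag (s : Finset ι) (n : ℕ) : Finset (ι → ℕ) :=
  {f ∈ s.piAntidiag n | ∀ i ∈ s, f i ≠ 0}

variable {s t : Finset ι} {m n : ℕ} {f : ι → ℕ}

theorem mem_positivePiAntidiag :
    f ∈ s.positivePiAntidiag n ↔ s.sum f = n ∧ ∀ i, f i ≠ 0 ↔ i ∈ s := by
  simp only [positivePiAntidiag, mem_filter, mem_piAntidiag]
  exact ⟨fun ⟨⟨hsum, hsupp⟩, hpos⟩ => ⟨hsum, fun i => ⟨hsupp i, hpos i⟩⟩,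
    fun ⟨hsum, hiff⟩ => ⟨⟨hsum, fun i => (hiff i).mp⟩, fun i => (hiff i).mpr⟩⟩

theorem disjoint_positivePiAntidiag (h : s ≠ t) :
    Disjoint (s.positivePiAntidiag m) (t.positivePiAntidiag n) := by
  refine disjoint_left.mpr fun f hs ht => h ?_
  ext i
  rw [← ((mem_positivePiAntidiag.mp hs).2 i), (mem_positivePiAntidiag.mp ht).2 i]

theorem card_positivePiAntidiag_add_card (s : Finset ι) (m : ℕ) :
    #(s.positivePiAntidiag (m + #s)) = #(s.piAntidiag m) := by
  set one : ι → ℕ := fun i => if i ∈ s then 1 else 0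
  have sum_add_one (g : ι → ℕ) : ∑ i ∈ s, (g + one) i = ∑ i ∈ s, g i + #s := by
    simp [one, sum_add_distrib]
  have sub_add_one {f} (hf : f ∈ s.positivePiAntidiag (m + #s)) : f - one + one = f := by
    funext i
    have hiff := (mem_positivePiAntidiag.mp hf).2 i
    by_cases hi : i ∈ s
    · simp only [Pi.add_apply, Pi.sub_apply, one, if_pos hi]
      exact Nat.sub_add_cancel (Nat.one_le_iff_ne_zero.mpr (hiff.mpr hi))
    · simp [one, hi]
  refine card_nbij' (· - one) (· + one) (fun f hf => ?_) (fun g hg => ?_)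
    (fun f hf => sub_add_one hf) (fun g _ => by simp)
  · obtain ⟨hsum, hiff⟩ := mem_positivePiAntidiag.mp hf
    refine mem_piAntidiag.mpr ⟨?_, fun i hi => ?_⟩
    · rw [← sub_add_one hf, sum_add_one] at hsum
      exact Nat.add_right_cancel hsum
    · by_contra h
      simp [one, h, (hiff i).not.mpr h] at hi
  · obtain ⟨hsum, hsupp⟩ := mem_piAntidiag.mp hg
    refine mem_positivePiAntidiag.mpr ⟨by rw [sum_add_one, hsum], fun i => ?_⟩
    by_cases hi : i ∈ s
    · simp [one, hi]
    · simpa [one, hi] using mt (hsupp i) hi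

theorem positivePiAntidiag_eq_empty_of_lt (h : n < #s) : s.positivePiAntidiag n = ∅ := by
  refine eq_empty_of_forall_notMem fun f hf => h.not_ge ?_
  obtain ⟨hsum, hiff⟩ := mem_positivePiAntidiag.mp hf
  calc #s = ∑ _i ∈ s, 1 := (card_eq_sum_ones s)
    _ ≤ s.sum f := sum_le_sum fun i hi => Nat.one_le_iff_ne_zero.mpr ((hiff i).mpr hi)
    _ = n := hsum

theorem card_positivePiAntidiag (hs : s.Nonempty) (hn : 0 < n) :
    #(s.positivePiAntidiag n) = (n - 1).choose (#s - 1) := by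
  obtain ⟨k, hk⟩ := Nat.exists_eq_add_one.mpr hs.card_pos
  rcases le_or_gt #s n with hsn | hns
  · obtain ⟨m, rfl⟩ := Nat.exists_eq_add_of_le' hsn
    rw [card_positivePiAntidiag_add_card, card_piAntidiag_nat_eq_choose, hk,
      show k + 1 + m - 1 = m + k by omega, show m + (k + 1) - 1 = m + k by omega,
      Nat.add_sub_cancel, Nat.choose_symm_add]
  · rw [positivePiAntidiag_eq_empty_of_lt hns, card_empty, Nat.choose_eq_zero_of_lt (by omega)]

end Finset

theorem card_filter_fin_pairs_sub_eq {l d : ℕ} (hd : d < l) :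
    #{p ∈ ({p | p.1 ≤ p.2} : Finset (Fin l × Fin l)) | (p.2 : ℕ) - p.1 = d} = l - d := by
  rw [← card_range (l - d)]
  refine card_nbij (fun p => p.1) (fun p hp => ?_) (fun p hp q hq hpq => ?_) (fun a ha => ?_)
  · simp only [mem_coe, mem_filter, mem_univ, true_and] at hp
    have := p.2.isLt
    simp only [coe_range, Set.mem_Iio]
    omega
  · simp only [mem_coe, mem_filter, mem_univ, true_and] at hp hq
    have : (p.1 : ℕ) = q.1 := hpq
    have : (p.2 : ℕ) = q.2 := by rw [Fin.le_def] at hp hq; omega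
    ext <;> assumption
  · simp only [coe_range, Set.mem_Iio] at ha
    refine ⟨(⟨a, by omega⟩, ⟨a + d, by omega⟩), ?_, rfl⟩
    simp only [mem_coe, mem_filter, mem_univ, true_and, Fin.le_def]
    omega

theorem sum_fin_pairs_le {M : Type*} [AddCommMonoid M] (l : ℕ) (g : ℕ → M) :
    ∑ p ∈ ({p | p.1 ≤ p.2} : Finset (Fin l × Fin l)), g (p.2 - p.1) =
      ∑ d ∈ range l, (l - d) • g d := by
  rw [← sum_fiberwise_of_maps_to (t := range l) (g := fun p => (p.2 : ℕ) - p.1)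
    (fun p _ => mem_range.mpr (by omega))]
  refine sum_congr rfl fun d hd => ?_
  rw [sum_congr rfl fun p hp => by rw [(mem_filter.mp hp).2], sum_const,
    card_filter_fin_pairs_sub_eq (mem_range.mp hd)]

theorem sum_range_sub_mul_choose {l n : ℕ} (hn : 0 < n) :
    ∑ d ∈ range l, (l - d) * (n - 1).choose d =
      ∑ k ∈ Icc 1 (min l n), (l - k + 1) * (n - 1).choose (k - 1) := by
  have hvanish : ∀ d ∈ range l, d ∉ range (min l n) → (l - d) * (n - 1).choose d = 0 :=
    fun d hdl hd => by
      rw [mem_range] at hdl hd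
      rw [Nat.choose_eq_zero_of_lt (by omega), mul_zero]
  rw [← sum_subset (range_mono (min_le_left l n)) hvanish, ← Ico_add_one_right_eq_Icc,
    sum_Ico_eq_sum_range]
  refine sum_congr (by simp) fun d hd => ?_
  have := mem_range.mp hd
  rw [Nat.add_sub_cancel_left]
  congr 1
  omega

def intervalEstimates (l η : ℕ) : Finset (Fin l → ℕ) :=
  {e ∈ Fintype.piFinset (fun _ : Fin l => range (η + 1)) | (∑ i, e i = η) ∧
    ∃ a b : Fin l, a ≤ b ∧ ∀ i : Fin l, e i ≠ 0 ↔ (a ≤ i ∧ i ≤ b)}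

theorem intervalEstimates_eq_biUnion (l η : ℕ) :
    intervalEstimates l η = ({p | p.1 ≤ p.2} : Finset (Fin l × Fin l)).biUnion
      fun p => (Icc p.1 p.2).positivePiAntidiag η := by
  ext e
  simp only [intervalEstimates, mem_filter, Fintype.mem_piFinset, mem_range, mem_biUnion,
    mem_univ, true_and, mem_positivePiAntidiag, mem_Icc, Prod.exists]
  constructor
  · rintro ⟨-, hsum, a, b, hab, hiff⟩
    exact ⟨a, b, hab, by rwa [Fintype.sum_subset fun i hi => mem_Icc.mpr ((hiff i).mp hi)], hiff⟩
  · rintro ⟨a, b, hab, hsum, hiff⟩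
    rw [Fintype.sum_subset fun i hi => mem_Icc.mpr ((hiff i).mp hi)] at hsum
    refine ⟨fun i => Nat.lt_succ_of_le ?_, hsum, a, b, hab, hiff⟩
    exact hsum ▸ single_le_sum (fun j _ => Nat.zero_le (e j)) (mem_univ i)

theorem pairwiseDisjoint_positivePiAntidiag_Icc {α : Type*} [PartialOrder α]
    [LocallyFiniteOrder α] [DecidableEq α] (n : ℕ) :
    ({p | p.1 ≤ p.2} : Set (α × α)).PairwiseDisjoint
      fun p => (Icc p.1 p.2).positivePiAntidiag n := by
  intro p hp q _ hpq
  refine disjoint_positivePiAntidiag fun h => hpq ?_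
  have hcoe : Set.Icc p.1 p.2 = Set.Icc q.1 q.2 := by
    simpa only [coe_Icc] using congrArg ((↑) : Finset α → Set α) h
  obtain ⟨h₁, h₂⟩ := (Set.Icc_eq_Icc_iff hp).mp hcoe
  exact Prod.ext h₁ h₂

theorem stmt_2_general (l η : ℕ) (hη : 0 < η) :
    ((Fintype.piFinset (fun _ : Fin l => Finset.range (η + 1))).filter
        (fun e => (∑ i, e i = η) ∧
          ∃ a b : Fin l, a ≤ b ∧ ∀ i : Fin l, e i ≠ 0 ↔ (a ≤ i ∧ i ≤ b))).card =
      ∑ k ∈ Finset.Icc 1 (min l η), (l - k + 1) * (η - 1).choose (k - 1) := by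
  change #(intervalEstimates l η) = _
  calc #(intervalEstimates l η)
      = ∑ p ∈ ({p | p.1 ≤ p.2} : Finset (Fin l × Fin l)),
          #((Icc p.1 p.2).positivePiAntidiag η) := by
        rw [intervalEstimates_eq_biUnion, card_biUnion]
        rw [coe_filter_univ]
        exact pairwiseDisjoint_positivePiAntidiag_Icc η
    _ = ∑ p ∈ ({p | p.1 ≤ p.2} : Finset (Fin l × Fin l)), (η - 1).choose (p.2 - p.1) := by
        refine sum_congr rfl fun p hp => ?_
        have hp : p.1 ≤ p.2 := (mem_filter.mp hp).2
        rw [card_positivePiAntidiag (nonempty_Icc.mpr hp) hη, Fin.card_Icc]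
        congr 1
        rw [Fin.le_def] at hp
        omega
    _ = ∑ d ∈ range l, (l - d) * (η - 1).choose d := sum_fin_pairs_le l _
    _ = _ := sum_range_sub_mul_choose hη

/-- The number of interval multiset estimates for the assessment problem `P^{l,η}`
(tuples `(η_1,…,η_l) ∈ ℕ^l` with total `η` whose support is a nonempty interval of
consecutive levels) equals `Σ_{k=1}^{min(l,η)} (l−k+1)·C(η−1, k−1)`. -/
theorem stmt_2 (l η : ℕ) (hl : 0 < l) (hη : 0 < η) :
    ((Fintype.piFinset (fun _ : Fin l => Finset.range (η + 1))).filter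
        (fun e => (∑ i, e i = η) ∧
          ∃ a b : Fin l, a ≤ b ∧ ∀ i : Fin l, e i ≠ 0 ↔ (a ≤ i ∧ i ≤ b))).card =
      ∑ k ∈ Finset.Icc 1 (min l η), (l - k + 1) * (η - 1).choose (k - 1) :=
  stmt_2_general l η hη
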